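/- Let G be a simple graph with maximum degree Δ and α a proper (Δ+1)-edge coloring of G. For any vertex u and any non-saturated cycle fan X_u(α,v) in D_u(α), the colorings α and X_u^{-1}(α,v) are Kempe-equivalent. -/

import Mathlib

open SimpleGraph

/-- A proper edge coloring: edges of `G` sharing a vertex get different colors. -/
def IsProperEdgeColoring {V : Type*} (G : SimpleGraph V) {t : ℕ} (c : Sym2 V → Fin t) : Prop :=
  ∀ e₁ ∈ G.edgeSet, ∀ e₂ ∈ G.edgeSet, e₁ ≠ e₂ → (∃ v, v ∈ e₁ ∧ v ∈ e₂) → c e₁ ≠ c e₂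

/-- The chromatic index: least number of colors in a proper edge coloring. -/
noncomputable def chromaticIndex {V : Type*} (G : SimpleGraph V) : ℕ :=
  sInf {t | ∃ c : Sym2 V → Fin t, IsProperEdgeColoring G c}

/-- Color `c` is missing at vertex `w` under coloring `α`. -/
def MissingAt {V : Type*} (G : SimpleGraph V) {t : ℕ} (α : Sym2 V → Fin t) (c : Fin t)
    (w : V) : Prop :=
  ∀ e ∈ G.edgeSet, w ∈ e → α e ≠ c

/-- The subgraph `K_α(a,b)` induced by the edges colored `a` or `b`. -/
def bicolored {V : Type*} (G : SimpleGraph V) {t : ℕ} (α : Sym2 V → Fin t) (a b : Fin t) :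
    SimpleGraph V :=
  SimpleGraph.fromEdgeSet {e | e ∈ G.edgeSet ∧ (α e = a ∨ α e = b)}

/-- `β` is obtained from `α` by a single Kempe change: swapping two colors `a`, `b` on a
connected component of the bicolored subgraph `K_α(a,b)`. -/
def IsKempeSwap {V : Type*} (G : SimpleGraph V) {t : ℕ} (α β : Sym2 V → Fin t) : Prop :=
  ∃ a b : Fin t, ∃ C : (bicolored G α a b).ConnectedComponent,
    (∀ e ∈ G.edgeSet, (α e = a ∨ α e = b) →
      (∀ v ∈ e, (bicolored G α a b).connectedComponentMk v = C) →
      ((α e = a ∧ β e = b) ∨ (α e = b ∧ β e = a))) ∧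
    (∀ e : Sym2 V, (e ∉ G.edgeSet ∨ (α e ≠ a ∧ α e ≠ b) ∨
        ∃ v ∈ e, (bicolored G α a b).connectedComponentMk v ≠ C) → β e = α e)

/-- Kempe equivalence: reachability by a sequence of Kempe changes. -/
def KempeEquiv {V : Type*} (G : SimpleGraph V) {t : ℕ} (α β : Sym2 V → Fin t) : Prop :=
  Relation.ReflTransGen (IsKempeSwap G) α β

/-- `G` is chordless: in every cycle, any two nonconsecutive vertices are nonadjacent. -/
def Chordless {V : Type*} (G : SimpleGraph V) : Prop :=
  ∀ n : ℕ, 3 ≤ n → ∀ c : ZMod n → V, Function.Injective c →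
    (∀ i, G.Adj (c i) (c (i + 1))) →
    ∀ i j : ZMod n, j ≠ i → j ≠ i + 1 → i ≠ j + 1 → ¬ G.Adj (c i) (c j)

/-- An `α`-fan at `u`: edges `u x₀, …, u xₚ` with `m i` a color missing at `x i`
and `α (u x_{i+1}) = m i`. -/
structure IsFan {V : Type*} (G : SimpleGraph V) {t : ℕ} (α : Sym2 V → Fin t)
    (u : V) (p : ℕ) (x : ℕ → V) (m : ℕ → Fin t) : Prop where
  adj : ∀ i ≤ p, G.Adj u (x i)
  inj : ∀ i ≤ p, ∀ j ≤ p, x i = x j → i = j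
  missing : ∀ i ≤ p, MissingAt G α (m i) (x i)
  succ : ∀ i < p, α s(u, x (i + 1)) = m i

/-- The coloring `X_u^{-1}(α,v)`: each fan edge `u xᵢ` is recolored with `m i`,
all other edges keep their color. -/
def IsFanRecolor {V : Type*} {t : ℕ} (α : Sym2 V → Fin t)
    (u : V) (p : ℕ) (x : ℕ → V) (m : ℕ → Fin t) (β : Sym2 V → Fin t) : Prop :=
  (∀ i ≤ p, β s(u, x i) = m i) ∧ (∀ e : Sym2 V, (∀ i ≤ p, e ≠ s(u, x i)) → β e = α e)

/-- A cycle fan is saturated if for every `i` the component of `K_α(α(u xᵢ), m_α(u))`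
containing `u` also contains `x_{i-1}` (cyclically). -/
def SaturatedCycleFan {V : Type*} (G : SimpleGraph V) {t : ℕ} (α : Sym2 V → Fin t)
    (u : V) (p : ℕ) (x : ℕ → V) (mu : Fin t) : Prop :=
  ∀ i ≤ p, (bicolored G α (α s(u, x i)) mu).connectedComponentMk u =
    (bicolored G α (α s(u, x i)) mu).connectedComponentMk (x (if i = 0 then p else i - 1))

/-!
Let `i` be an index where saturation fails, `a = α(u x_i)`, and let `C` be the component of
`K_α(a, m_α(u))` containing `x_{i-1}`, which avoids `u`. Swapping `a` and `m_α(u)` on `C` makes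
`m_α(u)` missing at `x_{i-1}`, so the fan read from `x_i` to `x_{i-1}` becomes a path fan ending
in a colour missing at `u`. A path fan is inverted by recolouring its edges one at a time from the
far end, each step a Kempe change on a two-vertex component. Afterwards `a` is missing at `u`,
and `u x_{i-1}` is the only edge joining `u` to `K(a, m_α(u))`, whose component at `u` is now
`C ∪ {u}`; swapping it undoes the first change on `C` and gives `u x_{i-1}` its target colour `a`.
-/

open Function

section KempeChains

variable {V : Type*} {G : SimpleGraph V} {t : ℕ}

theorem IsProperEdgeColoring.eq_of_mem {α : Sym2 V → Fin t} (hα : IsProperEdgeColoring G α)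
    {e₁ e₂ : Sym2 V} (he₁ : e₁ ∈ G.edgeSet) (he₂ : e₂ ∈ G.edgeSet) {v : V} (hv₁ : v ∈ e₁)
    (hv₂ : v ∈ e₂) (h : α e₁ = α e₂) : e₁ = e₂ := by
  by_contra hne
  exact hα e₁ he₁ e₂ he₂ hne ⟨v, hv₁, hv₂⟩ h

theorem MissingAt.apply_ne {α : Sym2 V → Fin t} {c : Fin t} {u w : V} (h : MissingAt G α c u)
    (huw : G.Adj u w) : α s(u, w) ≠ c :=
  h _ huw (Sym2.mem_mk_left _ _)

theorem SimpleGraph.Reachable.mem_of_closed {H : SimpleGraph V} {S : Set V}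
    (hS : ∀ ⦃y z⦄, H.Adj y z → y ∈ S → z ∈ S) {v w : V} (h : H.Reachable v w) (hv : v ∈ S) :
    w ∈ S := by
  obtain ⟨q⟩ := h
  induction q with
  | nil => exact hv
  | cons hadj _ ih => exact ih (hS hadj hv)

theorem connectedComponentMk_eq_iff_of_neighborSet_eq_singleton {H H' : SimpleGraph V} {u w : V}
    (hadj : ∀ ⦃y z⦄, y ≠ u → z ≠ u → (H'.Adj y z ↔ H.Adj y z))
    (hu : H'.neighborSet u = {w})
    (hw : H.connectedComponentMk u ≠ H.connectedComponentMk w) {v : V} (hv : v ≠ u) :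
    H'.connectedComponentMk v = H'.connectedComponentMk u ↔
      H.connectedComponentMk v = H.connectedComponentMk w := by
  have hu' : ∀ z, H'.Adj u z ↔ z = w := fun z => by
    rw [← mem_neighborSet, hu, Set.mem_singleton_iff]
  constructor
  · intro h
    have hS : ∀ ⦃y z⦄, H'.Adj y z →
        (y = u ∨ H.connectedComponentMk y = H.connectedComponentMk w) →
        z = u ∨ H.connectedComponentMk z = H.connectedComponentMk w := by
      rintro y z hyz (rfl | hy)
      · exact Or.inr (by rw [(hu' z).1 hyz])
      rcases eq_or_ne z u with rfl | hz
      · exact Or.inl rfl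
      have hyu : y ≠ u := by rintro rfl; exact hw hy
      exact Or.inr ((ConnectedComponent.connectedComponentMk_eq_of_adj
        ((hadj hyu hz).1 hyz)).symm.trans hy)
    exact ((ConnectedComponent.exact h.symm).mem_of_closed hS (Or.inl rfl)).resolve_left hv
  · intro h
    have hS : ∀ ⦃y z⦄, H.Adj y z →
        (H.connectedComponentMk y = H.connectedComponentMk w ∧
          H'.connectedComponentMk y = H'.connectedComponentMk u) →
        H.connectedComponentMk z = H.connectedComponentMk w ∧
          H'.connectedComponentMk z = H'.connectedComponentMk u := by
      rintro y z hyz ⟨hy, hy'⟩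
      have hz := (ConnectedComponent.connectedComponentMk_eq_of_adj hyz).symm.trans hy
      have hyu : y ≠ u := by rintro rfl; exact hw hy
      have hzu : z ≠ u := by rintro rfl; exact hw hz
      exact ⟨hz, (ConnectedComponent.connectedComponentMk_eq_of_adj
        ((hadj hyu hzu).2 hyz)).symm.trans hy'⟩
    exact ((ConnectedComponent.exact h.symm).mem_of_closed hS
      ⟨rfl, (ConnectedComponent.connectedComponentMk_eq_of_adj ((hu' w).2 rfl)).symm⟩).2

section Bicolored

variable {α : Sym2 V → Fin t} {a b : Fin t}

theorem bicolored_adj {v w : V} :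
    (bicolored G α a b).Adj v w ↔ G.Adj v w ∧ (α s(v, w) = a ∨ α s(v, w) = b) := by
  simp only [bicolored, fromEdgeSet_adj]
  exact ⟨fun h => h.1, fun h => ⟨h, h.1.ne⟩⟩

theorem connectedComponentMk_eq_of_mem_edge {e : Sym2 V} (he : e ∈ G.edgeSet)
    (hc : α e = a ∨ α e = b) {v w : V} (hv : v ∈ e) (hw : w ∈ e) :
    (bicolored G α a b).connectedComponentMk v = (bicolored G α a b).connectedComponentMk w := by
  rcases eq_or_ne v w with rfl | hvw
  · rfl
  obtain rfl := (Sym2.mem_and_mem_iff hvw).1 ⟨hv, hw⟩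
  exact ConnectedComponent.connectedComponentMk_eq_of_adj (bicolored_adj.2 ⟨he, hc⟩)

end Bicolored

noncomputable def kempeSwap (G : SimpleGraph V) (α : Sym2 V → Fin t) (a b : Fin t)
    (C : (bicolored G α a b).ConnectedComponent) (e : Sym2 V) : Fin t :=
  open Classical in
  if e ∈ G.edgeSet ∧ ∀ v ∈ e, (bicolored G α a b).connectedComponentMk v = C then
    Equiv.swap a b (α e) else α e

section KempeSwap

variable {α : Sym2 V → Fin t} {a b : Fin t} {C : (bicolored G α a b).ConnectedComponent}

theorem isKempeSwap_kempeSwap : IsKempeSwap G α (kempeSwap G α a b C) := by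
  refine ⟨a, b, C, fun e he hc hC => ?_, fun e he => ?_⟩
  · rw [kempeSwap, if_pos ⟨he, hC⟩]
    rcases hc with h | h <;> rw [h]
    · exact Or.inl ⟨rfl, Equiv.swap_apply_left a b⟩
    · exact Or.inr ⟨rfl, Equiv.swap_apply_right a b⟩
  · unfold kempeSwap
    split_ifs with h
    · rcases he with he | ⟨ha, hb⟩ | ⟨v, hv, hvC⟩
      · exact absurd h.1 he
      · exact Equiv.swap_apply_of_ne_of_ne ha hb
      · exact absurd (h.2 v hv) hvC
    · rfl

theorem kempeSwap_apply_of_mem_of_ne {e : Sym2 V} {v : V} (hv : v ∈ e)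
    (hC : (bicolored G α a b).connectedComponentMk v ≠ C) : kempeSwap G α a b C e = α e := by
  rw [kempeSwap, if_neg fun h => hC (h.2 v hv)]

theorem kempeSwap_eq_iff_of_ne {e : Sym2 V} {c : Fin t} (ha : c ≠ a) (hb : c ≠ b) :
    kempeSwap G α a b C e = c ↔ α e = c := by
  unfold kempeSwap
  split_ifs
  · rw [Equiv.swap_apply_eq_iff, Equiv.swap_apply_of_ne_of_ne ha hb]
  · rfl

theorem kempeSwap_apply_of_ne {e : Sym2 V} (ha : α e ≠ a) (hb : α e ≠ b) :
    kempeSwap G α a b C e = α e :=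
  (kempeSwap_eq_iff_of_ne ha hb).2 rfl

theorem kempeSwap_eq_or_eq_iff {e : Sym2 V} :
    (kempeSwap G α a b C e = a ∨ kempeSwap G α a b C e = b) ↔ (α e = a ∨ α e = b) := by
  unfold kempeSwap
  split_ifs
  · rw [Equiv.swap_apply_eq_iff, Equiv.swap_apply_eq_iff, Equiv.swap_apply_left,
      Equiv.swap_apply_right, or_comm]
  · rfl

theorem MissingAt.kempeSwap_of_ne {c : Fin t} {w : V} (h : MissingAt G α c w) (ha : c ≠ a)
    (hb : c ≠ b) : MissingAt G (kempeSwap G α a b C) c w := fun e he hwe => by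
  rw [Ne, kempeSwap_eq_iff_of_ne ha hb]
  exact h e he hwe

theorem MissingAt.kempeSwap {w : V} (h : MissingAt G α a w)
    (hw : (bicolored G α a b).connectedComponentMk w = C) :
    MissingAt G (kempeSwap G α a b C) b w := by
  intro e he hwe hb
  have ha : α e ≠ a := h e he hwe
  by_cases hc : α e = b
  · have hC : ∀ v ∈ e, (bicolored G α a b).connectedComponentMk v = C := fun v hv =>
      (connectedComponentMk_eq_of_mem_edge he (Or.inr hc) hv hwe).trans hw
    rw [_root_.kempeSwap, if_pos ⟨he, hC⟩, hc, Equiv.swap_apply_right] at hb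
    exact ha (hc.trans hb.symm)
  · exact hc ((kempeSwap_apply_of_ne ha hc).symm.trans hb)

theorem IsProperEdgeColoring.kempeSwap (hα : IsProperEdgeColoring G α) :
    IsProperEdgeColoring G (kempeSwap G α a b C) := by
  -- an `a`/`b`-edge meeting a swapped edge lies in the same component, so is swapped too
  have mixed : ∀ e₁ ∈ G.edgeSet, ∀ e₂ ∈ G.edgeSet, ∀ v ∈ e₁, v ∈ e₂ →
      (∀ w ∈ e₁, (bicolored G α a b).connectedComponentMk w = C) →
      ¬ (∀ w ∈ e₂, (bicolored G α a b).connectedComponentMk w = C) →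
      α e₁ ≠ α e₂ → Equiv.swap a b (α e₁) ≠ α e₂ := by
    intro e₁ _ e₂ he₂ v hv₁ hv₂ hC₁ hC₂ hne
    have hab : ¬ (α e₂ = a ∨ α e₂ = b) := fun hc => hC₂ fun w hw =>
      (connectedComponentMk_eq_of_mem_edge he₂ hc hw hv₂).trans (hC₁ v hv₁)
    push Not at hab
    rwa [Ne, Equiv.swap_apply_eq_iff, Equiv.swap_apply_of_ne_of_ne hab.1 hab.2]
  intro e₁ he₁ e₂ he₂ hne ⟨v, hv₁, hv₂⟩
  have hα' := hα e₁ he₁ e₂ he₂ hne ⟨v, hv₁, hv₂⟩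
  unfold _root_.kempeSwap
  split_ifs with h₁ h₂ h₂
  · exact (Equiv.swap a b).injective.ne hα'
  · exact mixed e₁ he₁ e₂ he₂ v hv₁ hv₂ h₁.2 (fun h => h₂ ⟨he₂, h⟩) hα'
  · exact (mixed e₂ he₂ e₁ he₁ v hv₂ hv₁ h₂.2 (fun h => h₁ ⟨he₁, h⟩) hα'.symm).symm
  · exact hα'

theorem kempeSwap_kempeSwap_apply {γ : Sym2 V → Fin t}
    {C' : (bicolored G γ a b).ConnectedComponent} {e : Sym2 V}
    (hγe : γ e = kempeSwap G α a b C e)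
    (hC : ∀ v ∈ e, (bicolored G γ a b).connectedComponentMk v = C' ↔
      (bicolored G α a b).connectedComponentMk v = C) :
    kempeSwap G γ a b C' e = α e := by
  by_cases h : e ∈ G.edgeSet ∧ ∀ v ∈ e, (bicolored G α a b).connectedComponentMk v = C
  · rw [kempeSwap, if_pos ⟨h.1, fun v hv => (hC v hv).2 (h.2 v hv)⟩, hγe,
      kempeSwap, if_pos h, Equiv.swap_apply_self]
  · rw [kempeSwap, if_neg fun h' => h ⟨h'.1, fun v hv => (hC v hv).1 (h'.2 v hv)⟩, hγe,
      kempeSwap, if_neg h]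

end KempeSwap

section SingleEdge

variable [DecidableEq V] {α : Sym2 V → Fin t} {u w : V} {b : Fin t}

/-- The component of `u` in `K_α(α(uw), b)` is the edge `uw` alone. -/
theorem kempeSwap_eq_update (hα : IsProperEdgeColoring G α) (huw : G.Adj u w)
    (hu : MissingAt G α b u) (hw : MissingAt G α b w) :
    kempeSwap G α (α s(u, w)) b ((bicolored G α (α s(u, w)) b).connectedComponentMk u) =
      update α s(u, w) b := by
  set K := bicolored G α (α s(u, w)) b
  have honly : ∀ e ∈ G.edgeSet, ∀ v ∈ e, (v = u ∨ v = w) → (α e = α s(u, w) ∨ α e = b) →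
      e = s(u, w) := by
    rintro e he v hve hv (hc | hc)
    · exact hα.eq_of_mem he huw hve (by rcases hv with rfl | rfl <;> simp) hc
    · rcases hv with rfl | rfl
      exacts [absurd hc (hu e he hve), absurd hc (hw e he hve)]
  have hcomp : ∀ v, K.connectedComponentMk v = K.connectedComponentMk u → v = u ∨ v = w := by
    refine fun v hv => (ConnectedComponent.exact hv.symm).mem_of_closed (S := {u, w}) ?_ (.inl rfl)
    intro y z hyz hy
    have hyz' := bicolored_adj.1 hyz
    have h := honly _ hyz'.1 y (Sym2.mem_mk_left y z) hy hyz'.2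
    exact Sym2.mem_iff.1 (h ▸ Sym2.mem_mk_right y z)
  funext e
  by_cases he : e = s(u, w)
  · subst he
    have hC : ∀ v ∈ s(u, w), K.connectedComponentMk v = K.connectedComponentMk u := by
      intro v hv
      rcases Sym2.mem_iff.1 hv with rfl | rfl
      · rfl
      · exact (ConnectedComponent.connectedComponentMk_eq_of_adj
          (bicolored_adj.2 ⟨huw, Or.inl rfl⟩)).symm
    rw [kempeSwap, if_pos ⟨huw, hC⟩, Equiv.swap_apply_left, update_self]
  · rw [update_of_ne he]
    unfold kempeSwap
    split_ifs with h
    · by_cases hc : α e = α s(u, w) ∨ α e = b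
      · have hv := Sym2.out_fst_mem e
        exact absurd (honly e h.1 _ hv (hcomp _ (h.2 _ hv)) hc) he
      · push Not at hc
        exact Equiv.swap_apply_of_ne_of_ne hc.1 hc.2
    · rfl

theorem isKempeSwap_update (hα : IsProperEdgeColoring G α) (huw : G.Adj u w)
    (hu : MissingAt G α b u) (hw : MissingAt G α b w) : IsKempeSwap G α (update α s(u, w) b) :=
  kempeSwap_eq_update hα huw hu hw ▸ isKempeSwap_kempeSwap

theorem IsProperEdgeColoring.update (hα : IsProperEdgeColoring G α) (huw : G.Adj u w)
    (hu : MissingAt G α b u) (hw : MissingAt G α b w) :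
    IsProperEdgeColoring G (update α s(u, w) b) :=
  kempeSwap_eq_update hα huw hu hw ▸ hα.kempeSwap

end SingleEdge

namespace IsFan

variable {α : Sym2 V → Fin t} {u : V} {p : ℕ} {x : ℕ → V} {m : ℕ → Fin t} {i j : ℕ}

theorem edge_injective (hfan : IsFan G α u p x m) (hi : i ≤ p) (hj : j ≤ p)
    (h : s(u, x i) = s(u, x j)) : i = j :=
  hfan.inj i hi j hj (Sym2.congr_right.1 h)

theorem not_mem_edge (hfan : IsFan G α u p x m) (hi : i ≤ p) (hj : j ≤ p) (hij : i ≠ j) :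
    x i ∉ s(u, x j) := by
  rw [Sym2.mem_iff]
  rintro (h | h)
  · exact (hfan.adj i hi).ne h.symm
  · exact hij (hfan.inj i hi j hj h)

theorem ne_apply_zero_of_lt (hα : IsProperEdgeColoring G α) (hfan : IsFan G α u p x m)
    (hi : i < p) : m i ≠ α s(u, x 0) := by
  rw [← hfan.succ i hi]
  refine fun h => Nat.succ_ne_zero i (hfan.edge_injective hi (Nat.zero_le p) ?_)
  exact hα.eq_of_mem (hfan.adj _ hi) (hfan.adj 0 (Nat.zero_le p)) (Sym2.mem_mk_left _ _)
    (Sym2.mem_mk_left _ _) h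

theorem ne_of_lt_of_missingAt (hfan : IsFan G α u p x m) {c : Fin t} (hc : MissingAt G α c u)
    (hi : i < p) : m i ≠ c :=
  hfan.succ i hi ▸ hc.apply_ne (hfan.adj _ hi)

theorem update_last [DecidableEq V] (hα : IsProperEdgeColoring G α)
    (hfan : IsFan G α u (p + 1) x m) (hmiss : MissingAt G α (m (p + 1)) u) :
    IsFan G (update α s(u, x (p + 1)) (m (p + 1))) u p x m ∧
      MissingAt G (update α s(u, x (p + 1)) (m (p + 1))) (m p) u := by
  refine ⟨⟨fun i hi => hfan.adj i (by omega), fun i hi j hj => hfan.inj i (by omega) j (by omega),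
    fun i hi e he hxe => ?_, fun i hi => ?_⟩, fun e he hue => ?_⟩
  · rcases eq_or_ne e s(u, x (p + 1)) with rfl | hep
    · exact absurd hxe (hfan.not_mem_edge (by omega) le_rfl (by omega))
    · rw [update_of_ne hep]
      exact hfan.missing i (by omega) e he hxe
  · rw [update_of_ne fun h => by have := hfan.edge_injective (by omega) le_rfl h; omega]
    exact hfan.succ i (by omega)
  · rw [← hfan.succ p (by omega)]
    rcases eq_or_ne e s(u, x (p + 1)) with rfl | hep
    · rw [update_self]
      exact (hmiss.apply_ne (hfan.adj _ le_rfl)).symm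
    · rw [update_of_ne hep]
      exact fun h => hep (hα.eq_of_mem he (hfan.adj _ le_rfl) hue (Sym2.mem_mk_left _ _) h)

theorem exists_isFanRecolor_kempeEquiv (hα : IsProperEdgeColoring G α)
    (hfan : IsFan G α u p x m) (hmiss : MissingAt G α (m p) u) :
    ∃ β, IsFanRecolor α u p x m β ∧ KempeEquiv G α β := by
  classical
  induction p generalizing α with
  | zero =>
    have hswap := isKempeSwap_update hα (hfan.adj 0 le_rfl) hmiss (hfan.missing 0 le_rfl)
    refine ⟨update α s(u, x 0) (m 0), ⟨fun i hi => ?_, fun e he => ?_⟩, .single hswap⟩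
    · obtain rfl := Nat.le_zero.1 hi
      exact update_self ..
    · exact update_of_ne (he 0 le_rfl) ..
  | succ p ih =>
    have hadj := hfan.adj (p + 1) le_rfl
    have hmiss' := hfan.missing (p + 1) le_rfl
    obtain ⟨hfan', hlast⟩ := hfan.update_last hα hmiss
    obtain ⟨β, ⟨hβfan, hβ⟩, hγβ⟩ := ih (hα.update hadj hmiss hmiss') hfan' hlast
    refine ⟨β, ⟨fun i hi => ?_, fun e he => ?_⟩,
      .head (isKempeSwap_update hα hadj hmiss hmiss') hγβ⟩
    · rcases hi.lt_or_eq with hi | rfl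
      · exact hβfan i (by omega)
      · rw [hβ _ fun j hj h => by have := hfan.edge_injective le_rfl (by omega) h; omega,
          update_self]
    · rw [hβ e fun j hj => he j (by omega), update_of_ne (he _ le_rfl)]

end IsFan

def IsCycleFan (G : SimpleGraph V) (α : Sym2 V → Fin t) (u : V) (p : ℕ) (x : ℕ → V)
    (m : ℕ → Fin t) : Prop :=
  IsFan G α u p x m ∧ m p = α s(u, x 0)

theorem exists_add_mod_succ_eq {p r j : ℕ} (hr : r ≤ p) (hj : j ≤ p) :
    ∃ k ≤ p, (k + r) % (p + 1) = j := by
  rcases le_or_gt r j with hrj | hjr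
  · exact ⟨j - r, by omega, by rw [Nat.sub_add_cancel hrj, Nat.mod_eq_of_lt (by omega)]⟩
  · refine ⟨j + (p + 1) - r, by omega, ?_⟩
    rw [Nat.sub_add_cancel (by omega), Nat.add_mod_right, Nat.mod_eq_of_lt (by omega)]

theorem add_mod_succ_eq_ite {p i : ℕ} (hi : i ≤ p) :
    (p + i) % (p + 1) = if i = 0 then p else i - 1 := by
  split_ifs with h
  · subst h
    exact Nat.mod_eq_of_lt (by omega)
  · rw [show p + i = i - 1 + (p + 1) by omega, Nat.add_mod_right, Nat.mod_eq_of_lt (by omega)]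

namespace IsCycleFan

variable {α : Sym2 V → Fin t} {u : V} {p : ℕ} {x : ℕ → V} {m : ℕ → Fin t}

theorem apply_succ_mod (hfan : IsCycleFan G α u p x m) (j : ℕ) :
    α s(u, x ((j + 1) % (p + 1))) = m (j % (p + 1)) := by
  rw [← Nat.mod_add_mod]
  have hle : j % (p + 1) ≤ p := Nat.le_of_lt_succ (Nat.mod_lt j p.succ_pos)
  rcases hle.lt_or_eq with hj | hj
  · rw [Nat.mod_eq_of_lt (by omega : j % (p + 1) + 1 < p + 1)]
    exact hfan.1.succ _ hj
  · rw [hj, Nat.mod_self]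
    exact hfan.2.symm

theorem rotate (hfan : IsCycleFan G α u p x m) (r : ℕ) :
    IsCycleFan G α u p (fun k => x ((k + r) % (p + 1))) (fun k => m ((k + r) % (p + 1))) := by
  have hle : ∀ k, (k + r) % (p + 1) ≤ p := fun k => Nat.lt_succ_iff.1 (Nat.mod_lt _ p.succ_pos)
  refine ⟨⟨fun k _ => hfan.1.adj _ (hle k), fun k hk l hl hkl => ?_,
    fun k _ => hfan.1.missing _ (hle k), fun k _ => ?_⟩, ?_⟩
  · have := Nat.ModEq.add_right_cancel' r (hfan.1.inj _ (hle k) _ (hle l) hkl)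
    rwa [Nat.ModEq, Nat.mod_eq_of_lt (by omega), Nat.mod_eq_of_lt (by omega)] at this
  · rw [Nat.add_right_comm, hfan.apply_succ_mod]
  · show m ((p + r) % (p + 1)) = α s(u, x ((0 + r) % (p + 1)))
    rw [← hfan.apply_succ_mod, show p + r + 1 = 0 + r + (p + 1) by omega, Nat.add_mod_right]

end IsCycleFan

theorem IsFanRecolor.rotate {α β : Sym2 V → Fin t} {u : V} {p r : ℕ} {x : ℕ → V}
    {m : ℕ → Fin t} (hβ : IsFanRecolor α u p x m β) (hr : r ≤ p) :
    IsFanRecolor α u p (fun k => x ((k + r) % (p + 1))) (fun k => m ((k + r) % (p + 1))) β := by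
  refine ⟨fun k _ => hβ.1 _ (Nat.lt_succ_iff.1 (Nat.mod_lt _ p.succ_pos)), fun e he => ?_⟩
  refine hβ.2 e fun j hj => ?_
  obtain ⟨k, hk, rfl⟩ := exists_add_mod_succ_eq hr hj
  exact he k hk

namespace IsCycleFan

variable {α : Sym2 V → Fin t} {u : V} {p : ℕ} {x : ℕ → V} {m : ℕ → Fin t} {mu : Fin t}

theorem isFan_kempeSwap (hα : IsProperEdgeColoring G α) (hfan : IsCycleFan G α u p x m)
    (hmu : MissingAt G α mu u)
    (hne : (bicolored G α (α s(u, x 0)) mu).connectedComponentMk u ≠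
      (bicolored G α (α s(u, x 0)) mu).connectedComponentMk (x p)) :
    IsFan G (kempeSwap G α (α s(u, x 0)) mu
      ((bicolored G α (α s(u, x 0)) mu).connectedComponentMk (x p))) u p x (update m p mu) := by
  refine ⟨hfan.1.adj, hfan.1.inj, fun i hi => ?_, fun i hi => ?_⟩
  · rcases hi.lt_or_eq with hi | rfl
    · rw [update_of_ne hi.ne]
      exact (hfan.1.missing i hi.le).kempeSwap_of_ne (hfan.1.ne_apply_zero_of_lt hα hi)
        (hfan.1.ne_of_lt_of_missingAt hmu hi)
    · have hmiss := hfan.1.missing i le_rfl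
      rw [hfan.2] at hmiss
      rw [update_self]
      exact hmiss.kempeSwap rfl
  · rw [update_of_ne hi.ne, kempeSwap_apply_of_mem_of_ne (Sym2.mem_mk_left _ _) hne]
    exact hfan.1.succ i hi

theorem eq_edge_last_of_isFanRecolor {γ : Sym2 V → Fin t} (hα : IsProperEdgeColoring G α)
    (hfan : IsCycleFan G α u p x m) (hmu : MissingAt G α mu u)
    (hne : (bicolored G α (α s(u, x 0)) mu).connectedComponentMk u ≠
      (bicolored G α (α s(u, x 0)) mu).connectedComponentMk (x p))
    (hγ : IsFanRecolor (kempeSwap G α (α s(u, x 0)) mu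
      ((bicolored G α (α s(u, x 0)) mu).connectedComponentMk (x p))) u p x (update m p mu) γ)
    {e : Sym2 V} (he : e ∈ G.edgeSet) (hue : u ∈ e) (hc : γ e = α s(u, x 0) ∨ γ e = mu) :
    e = s(u, x p) := by
  by_cases hfe : ∃ k ≤ p, e = s(u, x k)
  · obtain ⟨k, hk, rfl⟩ := hfe
    rcases hk.lt_or_eq with hk | rfl
    · rw [hγ.1 k hk.le, update_of_ne hk.ne] at hc
      exact absurd hc (not_or.2 ⟨hfan.1.ne_apply_zero_of_lt hα hk,
        hfan.1.ne_of_lt_of_missingAt hmu hk⟩)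
    · rfl
  · push Not at hfe
    rw [hγ.2 e hfe, kempeSwap_apply_of_mem_of_ne hue hne] at hc
    rcases hc with hc | hc
    · exact absurd (hα.eq_of_mem he (hfan.1.adj 0 (Nat.zero_le _)) hue (Sym2.mem_mk_left _ _)
        hc) (hfe 0 (Nat.zero_le _))
    · exact absurd hc (hmu e he hue)

theorem connectedComponentMk_eq_iff_of_isFanRecolor {γ : Sym2 V → Fin t}
    (hα : IsProperEdgeColoring G α) (hfan : IsCycleFan G α u p x m) (hmu : MissingAt G α mu u)
    (hne : (bicolored G α (α s(u, x 0)) mu).connectedComponentMk u ≠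
      (bicolored G α (α s(u, x 0)) mu).connectedComponentMk (x p))
    (hγ : IsFanRecolor (kempeSwap G α (α s(u, x 0)) mu
      ((bicolored G α (α s(u, x 0)) mu).connectedComponentMk (x p))) u p x (update m p mu) γ)
    {v : V} (hv : v ≠ u) :
    (bicolored G γ (α s(u, x 0)) mu).connectedComponentMk v =
        (bicolored G γ (α s(u, x 0)) mu).connectedComponentMk u ↔
      (bicolored G α (α s(u, x 0)) mu).connectedComponentMk v =
        (bicolored G α (α s(u, x 0)) mu).connectedComponentMk (x p) := by
  refine connectedComponentMk_eq_iff_of_neighborSet_eq_singleton (fun y z hy hz => ?_) ?_ hne hv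
  · have hyz : u ∉ s(y, z) := by simp [Sym2.mem_iff, hy.symm, hz.symm]
    rw [bicolored_adj, bicolored_adj, hγ.2 s(y, z) fun k _ h => hyz (h ▸ Sym2.mem_mk_left _ _),
      kempeSwap_eq_or_eq_iff]
  · ext z
    rw [mem_neighborSet, bicolored_adj, Set.mem_singleton_iff]
    refine ⟨fun h => Sym2.congr_right.1
      (hfan.eq_edge_last_of_isFanRecolor hα hmu hne hγ h.1 (Sym2.mem_mk_left _ _) h.2), ?_⟩
    rintro rfl
    exact ⟨hfan.1.adj p le_rfl, Or.inr (by rw [hγ.1 p le_rfl, update_self])⟩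

theorem kempeSwap_eq_of_isFanRecolor {β γ : Sym2 V → Fin t} (hα : IsProperEdgeColoring G α)
    (hfan : IsCycleFan G α u p x m) (hmu : MissingAt G α mu u)
    (hne : (bicolored G α (α s(u, x 0)) mu).connectedComponentMk u ≠
      (bicolored G α (α s(u, x 0)) mu).connectedComponentMk (x p))
    (hγ : IsFanRecolor (kempeSwap G α (α s(u, x 0)) mu
      ((bicolored G α (α s(u, x 0)) mu).connectedComponentMk (x p))) u p x (update m p mu) γ)
    (hβ : IsFanRecolor α u p x m β) :
    kempeSwap G γ (α s(u, x 0)) mu ((bicolored G γ (α s(u, x 0)) mu).connectedComponentMk u) =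
      β := by
  have hK' {v : V} := hfan.connectedComponentMk_eq_iff_of_isFanRecolor hα hmu hne hγ (v := v)
  set a := α s(u, x 0)
  set K' := bicolored G γ a mu
  have hγ_last : γ s(u, x p) = mu := by rw [hγ.1 p le_rfl, update_self]
  funext e
  by_cases hfe : ∃ k ≤ p, e = s(u, x k)
  · obtain ⟨k, hk, rfl⟩ := hfe
    rw [hβ.1 k hk]
    rcases hk.lt_or_eq with hk | rfl
    · have hγk : γ s(u, x k) = m k := by rw [hγ.1 k hk.le, update_of_ne hk.ne]
      rw [kempeSwap_apply_of_ne (hγk ▸ hfan.1.ne_apply_zero_of_lt hα hk)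
        (hγk ▸ hfan.1.ne_of_lt_of_missingAt hmu hk), hγk]
    · have hC : ∀ v ∈ s(u, x k), K'.connectedComponentMk v = K'.connectedComponentMk u := by
        intro v hv
        rcases Sym2.mem_iff.1 hv with rfl | rfl
        · rfl
        · exact (ConnectedComponent.connectedComponentMk_eq_of_adj
            (bicolored_adj.2 ⟨hfan.1.adj k le_rfl, Or.inr hγ_last⟩)).symm
      rw [kempeSwap, if_pos ⟨hfan.1.adj k le_rfl, hC⟩, hγ_last, Equiv.swap_apply_right, hfan.2]
  push Not at hfe
  rw [hβ.2 e hfe]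
  by_cases hue : u ∈ e
  · rw [← kempeSwap_apply_of_mem_of_ne hue hne, ← hγ.2 e hfe]
    unfold kempeSwap
    split_ifs with h
    · have hc : ¬ (γ e = a ∨ γ e = mu) := fun hc =>
        hfe p le_rfl (hfan.eq_edge_last_of_isFanRecolor hα hmu hne hγ h.1 hue hc)
      push Not at hc
      exact Equiv.swap_apply_of_ne_of_ne hc.1 hc.2
    · rfl
  exact kempeSwap_kempeSwap_apply (hγ.2 e hfe) fun v hv => hK' fun h => hue (h ▸ hv)

theorem kempeEquiv_of_connectedComponentMk_ne {β : Sym2 V → Fin t}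
    (hα : IsProperEdgeColoring G α) (hfan : IsCycleFan G α u p x m) (hmu : MissingAt G α mu u)
    (hne : (bicolored G α (α s(u, x 0)) mu).connectedComponentMk u ≠
      (bicolored G α (α s(u, x 0)) mu).connectedComponentMk (x p))
    (hβ : IsFanRecolor α u p x m β) : KempeEquiv G α β := by
  have hmu₁ : MissingAt G (kempeSwap G α (α s(u, x 0)) mu
      ((bicolored G α (α s(u, x 0)) mu).connectedComponentMk (x p))) mu u := fun e he hue => by
    rw [kempeSwap_apply_of_mem_of_ne hue hne]
    exact hmu e he hue
  obtain ⟨γ, hγ, hα₁γ⟩ := (hfan.isFan_kempeSwap hα hmu hne).exists_isFanRecolor_kempeEquiv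
    hα.kempeSwap (by rw [update_self]; exact hmu₁)
  rw [← hfan.kempeSwap_eq_of_isFanRecolor hα hmu hne hγ hβ]
  exact .head isKempeSwap_kempeSwap (hα₁γ.tail isKempeSwap_kempeSwap)

end IsCycleFan

end KempeChains

/-- Lemma 2.2: for a non-saturated cycle fan `X_u(α,v)` in a `(Δ+1)`-coloring `α`,
the colorings `α` and `X_u^{-1}(α,v)` are Kempe-equivalent. -/
theorem stmt6 {V : Type*} [Fintype V] (G : SimpleGraph V) [DecidableRel G.Adj]
    (α : Sym2 V → Fin (G.maxDegree + 1)) (hα : IsProperEdgeColoring G α)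
    (u : V) (p : ℕ) (x : ℕ → V) (m : ℕ → Fin (G.maxDegree + 1))
    (hfan : IsFan G α u p x m) (hcycle : m p = α s(u, x 0))
    (mu : Fin (G.maxDegree + 1)) (hmu : MissingAt G α mu u)
    (hns : ¬ SaturatedCycleFan G α u p x mu)
    (β : Sym2 V → Fin (G.maxDegree + 1)) (hβ : IsFanRecolor α u p x m β) :
    KempeEquiv G α β := by
  unfold SaturatedCycleFan at hns
  push Not at hns
  obtain ⟨i, hi, hnsi⟩ := hns
  refine (IsCycleFan.rotate ⟨hfan, hcycle⟩ i).kempeEquiv_of_connectedComponentMk_ne hα hmu ?_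
    (hβ.rotate hi)
  have hfirst : (0 + i) % (p + 1) = i := by rw [zero_add, Nat.mod_eq_of_lt (by omega)]
  rwa [hfirst, add_mod_succ_eq_ite hi]
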